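/- arXiv:1508.02756 — 2 statements merged into one kernel-verified Lean document; each statement's English description precedes it below -/
import Mathlib

section
/- Assume condition (H.1) holds for (β, α, λ, φ). Then there exists a constant C > 0 such that for all r, s, t with 0 < 2s ≤ t/3 ≤ r ≤ t - 2s, setting g₃(r,t,s) := [R(t, r) - R(t-s, r) - R(t, r-s) + R(t-s, r-s)] - λ (r-s)^{2β-α} [ (t-r-s)^α + (t-r+s)^α - 2(t-r)^α ], one has |g₃(r,t,s)| ≤ C s² (r-s)^{2β-α-1} (t-r-s)^{α-1} + C s² (r-s)^{2β-2}. -/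
noncomputable section

open Filter MeasureTheory

/-- Condition (H.1) of the paper: `φ x = -λ (x-1)^α + ψ x`, where `ψ` is twice
differentiable on an open set containing `[1,∞)` and satisfies the bounds
(i), (ii) and the relation (iii). -/
def CondH1 (β α lam : ℝ) (φ ψ : ℝ → ℝ) : Prop :=
  (∀ x : ℝ, 1 ≤ x → φ x = -lam * (x - 1) ^ α + ψ x) ∧
  (∃ U : Set ℝ, IsOpen U ∧ Set.Ici (1 : ℝ) ⊆ U ∧
    ∀ x ∈ U, DifferentiableAt ℝ ψ x ∧ DifferentiableAt ℝ (deriv ψ) x) ∧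
  (∃ C₀ : ℝ, 0 ≤ C₀ ∧
    (∀ x : ℝ, 1 < x → |deriv ψ x| ≤ C₀ * x ^ (α - 1)) ∧
    (∀ x : ℝ, 1 < x → |deriv (deriv ψ) x| ≤ C₀ * x⁻¹ * (x - 1) ^ (α - 1)) ∧
    (1 ≤ α → deriv ψ 1 = β * ψ 1))

/-- Condition (H.2) of the paper: decay bounds for `φ'` and `φ''` on `[2,∞)`,
with exponent `ν ∈ (1,2]` and constant `C₁ > 0`. -/
def CondH2 (α ν C₁ : ℝ) (φ : ℝ → ℝ) : Prop :=
  0 < C₁ ∧ 1 < ν ∧ ν ≤ 2 ∧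
  ∀ x : ℝ, 2 ≤ x →
    (α < 1 → |deriv φ x| ≤ C₁ * (x - 1) ^ (-ν) ∧
      |deriv (deriv φ) x| ≤ C₁ * (x - 1) ^ (-ν - 1)) ∧
    (1 ≤ α → |deriv φ x| ≤ C₁ * (x - 1) ^ (α - 2) ∧
      |deriv (deriv φ) x| ≤ C₁ * (x - 1) ^ (α - 3))

/-- The covariance function `R(s,t) = (min s t)^{2β} φ(max s t / min s t)`
for `s, t > 0`, extended by `0` when `s = 0` or `t = 0`. -/
def Rcov (β : ℝ) (φ : ℝ → ℝ) (s t : ℝ) : ℝ :=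
  if s = 0 ∨ t = 0 then 0 else (min s t) ^ (2 * β) * φ (max s t / min s t)

/-- The increment covariance `r(j,k)` at integer times. -/
def rincr (β : ℝ) (φ : ℝ → ℝ) (j k : ℕ) : ℝ :=
  Rcov β φ ((j : ℝ) + 1) ((k : ℝ) + 1) - Rcov β φ (j : ℝ) ((k : ℝ) + 1)
    - Rcov β φ ((j : ℝ) + 1) (k : ℝ) + Rcov β φ (j : ℝ) (k : ℝ)

/-- The increment correlation `ρ(j,k) = r(j,k)/(ξ_j ξ_k)` with `ξ_j = √(r(j,j))`. -/
def rhoincr (β : ℝ) (φ : ℝ → ℝ) (j k : ℕ) : ℝ :=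
  rincr β φ j k / (Real.sqrt (rincr β φ j j) * Real.sqrt (rincr β φ k k))

/-- `R` is positive semidefinite. -/
def IsPosSemidef (β : ℝ) (φ : ℝ → ℝ) : Prop :=
  ∀ (m : ℕ) (ts a : Fin m → ℝ), (∀ i, 0 ≤ ts i) →
    0 ≤ ∑ i, ∑ l, a i * a l * Rcov β φ (ts i) (ts l)

/-- The second difference `|m+1|^α + |m-1|^α - 2|m|^α`. -/
def secondDiff (α : ℝ) (m : ℤ) : ℝ :=
  |(m : ℝ) + 1| ^ α + |(m : ℝ) - 1| ^ α - 2 * |(m : ℝ)| ^ α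


/-! On the region `0 < 2s ≤ t/3 ≤ r ≤ t - 2s` every covariance involved has its second argument
as the minimum, so by (H.1) `R(a,b) = -λ b^{2β-α} (a-b)^α + b^{2β} ψ(a/b)`. After subtracting the
main term, the `λ`-parts collapse to `-λ (r^{2β-α} - (r-s)^{2β-α}) ((t-r)^α - (t-r-s)^α)`, a product
of two increments, each bounded by the mean value theorem. The `ψ`-parts form the mixed second
difference of `G(u,v) = u^{2β} ψ(v/u)` over `[r-s, r] × [t-s, t]`, bounded by `s²` times the
supremum of `∂ᵤ∂ᵥG = u^{2β-2} ((2β-1) ψ'(x) - x ψ''(x))`, `x = v/u`, which (i) and (ii) control.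
On that rectangle `u`, `v` and `r - s` agree up to a factor `6`, and `v - u` and `t - r - s` up to
a factor `3`. -/

open Set

lemma rpow_le_mul_rpow_of_le_of_le_mul {x y K p : ℝ} (hy : 0 < y) (hyx : y ≤ x)
    (hxK : x ≤ K * y) (hK : 1 ≤ K) (hp : p ≤ 1) : x ^ p ≤ K * y ^ p := by
  rcases le_or_gt p 0 with hp0 | hp0
  · calc x ^ p ≤ y ^ p := Real.rpow_le_rpow_of_nonpos hy hyx hp0
      _ ≤ K * y ^ p := le_mul_of_one_le_left (by positivity) hK
  · calc x ^ p ≤ (K * y) ^ p := Real.rpow_le_rpow (by linarith) hxK hp0.le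
      _ = K ^ p * y ^ p := Real.mul_rpow (by linarith) hy.le
      _ ≤ K * y ^ p := by
        gcongr
        simpa using Real.rpow_le_rpow_of_exponent_le hK hp

lemma abs_rpow_sub_rpow_le {a b K p : ℝ} (ha : 0 < a) (hab : a ≤ b) (hbK : b ≤ K * a)
    (hK : 1 ≤ K) (hp : p ≤ 2) : |b ^ p - a ^ p| ≤ |p| * (K * a ^ (p - 1)) * (b - a) := by
  have h := (convex_Icc a b).norm_image_sub_le_of_norm_hasDerivWithin_le
    (f := fun x => x ^ p) (C := |p| * (K * a ^ (p - 1)))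
    (fun x hx => (Real.hasDerivAt_rpow_const (Or.inl (ha.trans_le hx.1).ne')).hasDerivWithinAt)
    (fun x hx => by
      rw [Real.norm_eq_abs, abs_mul, abs_of_nonneg (Real.rpow_nonneg (ha.le.trans hx.1) _)]
      gcongr
      exact rpow_le_mul_rpow_of_le_of_le_mul ha hx.1 (hx.2.trans hbK) hK (by linarith))
    (left_mem_Icc.2 hab) (right_mem_Icc.2 hab)
  rwa [Real.norm_eq_abs, Real.norm_eq_abs, abs_of_nonneg (sub_nonneg.2 hab)] at h

lemma abs_sub_sub_add_le_of_hasDerivWithinAt {f g h : ℝ → ℝ → ℝ} {a₁ a₂ b₁ b₂ M : ℝ}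
    (ha : a₁ ≤ a₂) (hb : b₁ ≤ b₂)
    (hf : ∀ u ∈ Icc a₁ a₂, ∀ v ∈ Icc b₁ b₂, HasDerivWithinAt (f u) (g u v) (Icc b₁ b₂) v)
    (hg : ∀ u ∈ Icc a₁ a₂, ∀ v ∈ Icc b₁ b₂,
      HasDerivWithinAt (fun u => g u v) (h u v) (Icc a₁ a₂) u)
    (hh : ∀ u ∈ Icc a₁ a₂, ∀ v ∈ Icc b₁ b₂, |h u v| ≤ M) :
    |f a₂ b₂ - f a₂ b₁ - f a₁ b₂ + f a₁ b₁| ≤ M * (a₂ - a₁) * (b₂ - b₁) := by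
  have hg_diff : ∀ v ∈ Icc b₁ b₂, ‖g a₂ v - g a₁ v‖ ≤ M * (a₂ - a₁) := fun v hv => by
    simpa [abs_of_nonneg (sub_nonneg.2 ha)] using
      (convex_Icc a₁ a₂).norm_image_sub_le_of_norm_hasDerivWithin_le
        (fun u hu => hg u hu v hv) (fun u hu => hh u hu v hv)
        (left_mem_Icc.2 ha) (right_mem_Icc.2 ha)
  have h := (convex_Icc b₁ b₂).norm_image_sub_le_of_norm_hasDerivWithin_le
    (f := fun v => f a₂ v - f a₁ v)
    (fun v hv => (hf a₂ (right_mem_Icc.2 ha) v hv).sub (hf a₁ (left_mem_Icc.2 ha) v hv))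
    hg_diff (left_mem_Icc.2 hb) (right_mem_Icc.2 hb)
  rw [Real.norm_eq_abs, Real.norm_eq_abs, abs_of_nonneg (sub_nonneg.2 hb)] at h
  convert h using 2
  ring

section RescaledPsi

variable {ψ : ℝ → ℝ} {q u v : ℝ}

lemma hasDerivAt_rpow_mul_comp_div (hu : 0 < u) (hψ : DifferentiableAt ℝ ψ (v / u)) :
    HasDerivAt (fun v => u ^ q * ψ (v / u)) (u ^ (q - 1) * deriv ψ (v / u)) v := by
  refine ((hψ.hasDerivAt.comp v ((hasDerivAt_id v).div_const u)).const_mul (u ^ q)).congr_deriv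
    ?_
  rw [Real.rpow_sub_one hu.ne']
  field_simp

lemma hasDerivAt_rpow_mul_deriv_comp_div (hu : 0 < u)
    (hψ' : DifferentiableAt ℝ (deriv ψ) (v / u)) :
    HasDerivAt (fun u => u ^ (q - 1) * deriv ψ (v / u))
      (u ^ (q - 2) * ((q - 1) * deriv ψ (v / u) - v / u * deriv (deriv ψ) (v / u))) u := by
  have hdiv : HasDerivAt (fun u => v / u) (v * -(u ^ 2)⁻¹) u := by
    simpa only [div_eq_mul_inv] using (hasDerivAt_inv hu.ne').const_mul v
  refine ((Real.hasDerivAt_rpow_const (p := q - 1) (Or.inl hu.ne')).mul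
    (hψ'.hasDerivAt.comp u hdiv)).congr_deriv ?_
  rw [show q - 1 = q - 2 + 1 by ring, Real.rpow_add_one hu.ne', show q - 2 + 1 - 1 = q - 2 by ring,
    Function.comp_def]
  field_simp
  ring

variable {C₀ α : ℝ}

lemma abs_mixedDeriv_rpow_mul_comp_div_le (hψ1 : ∀ x : ℝ, 1 < x → |deriv ψ x| ≤ C₀ * x ^ (α - 1))
    (hψ2 : ∀ x : ℝ, 1 < x → |deriv (deriv ψ) x| ≤ C₀ * x⁻¹ * (x - 1) ^ (α - 1))
    (hu : 0 < u) (huv : u < v) :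
    |u ^ (q - 2) * ((q - 1) * deriv ψ (v / u) - v / u * deriv (deriv ψ) (v / u))|
      ≤ C₀ * u ^ (q - α - 1) * (|q - 1| * v ^ (α - 1) + (v - u) ^ (α - 1)) := by
  have hx : 1 < v / u := (one_lt_div hu).2 huv
  have hx0 : 0 < v / u := by linarith
  have hv : 0 < v := hu.trans huv
  have hxψ2 : v / u * |deriv (deriv ψ) (v / u)| ≤ C₀ * (v / u - 1) ^ (α - 1) := by
    calc v / u * |deriv (deriv ψ) (v / u)|
        ≤ v / u * (C₀ * (v / u)⁻¹ * (v / u - 1) ^ (α - 1)) := by gcongr; exact hψ2 _ hx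
      _ = C₀ * (v / u - 1) ^ (α - 1) := by field_simp
  have hsub : v / u - 1 = (v - u) / u := by field_simp
  have hpow : u ^ (q - α - 1) = u ^ (q - 2) / u ^ (α - 1) := by
    rw [← Real.rpow_sub hu]; ring_nf
  calc |u ^ (q - 2) * ((q - 1) * deriv ψ (v / u) - v / u * deriv (deriv ψ) (v / u))|
      ≤ u ^ (q - 2) * (|q - 1| * |deriv ψ (v / u)| + v / u * |deriv (deriv ψ) (v / u)|) := by
        rw [abs_mul, abs_of_pos (Real.rpow_pos_of_pos hu _)]
        gcongr
        refine (abs_sub _ _).trans_eq ?_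
        rw [abs_mul, abs_mul, abs_of_pos hx0]
    _ ≤ u ^ (q - 2) * (|q - 1| * (C₀ * (v / u) ^ (α - 1)) + C₀ * (v / u - 1) ^ (α - 1)) := by
        gcongr
        exact hψ1 _ hx
    _ = C₀ * u ^ (q - α - 1) * (|q - 1| * v ^ (α - 1) + (v - u) ^ (α - 1)) := by
        rw [hsub, Real.div_rpow hv.le hu.le, Real.div_rpow (sub_nonneg.2 huv.le) hu.le, hpow]
        field_simp

lemma abs_rpow_mul_comp_div_mixedDiff_le {r s t : ℝ}
    (hdiff : ∀ x : ℝ, 1 < x → DifferentiableAt ℝ ψ x ∧ DifferentiableAt ℝ (deriv ψ) x)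
    (hψ1 : ∀ x : ℝ, 1 < x → |deriv ψ x| ≤ C₀ * x ^ (α - 1))
    (hψ2 : ∀ x : ℝ, 1 < x → |deriv (deriv ψ) x| ≤ C₀ * x⁻¹ * (x - 1) ^ (α - 1))
    (hC₀ : 0 ≤ C₀) (hq : q - α - 1 ≤ 1) (hα : α - 1 ≤ 1)
    (hs : 0 < s) (h2s : 2 * s ≤ r) (hrt : r + 2 * s ≤ t) (htr : t ≤ 3 * r) :
    |r ^ q * ψ (t / r) - r ^ q * ψ ((t - s) / r) - (r - s) ^ q * ψ (t / (r - s))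
        + (r - s) ^ q * ψ ((t - s) / (r - s))|
      ≤ C₀ * (12 * |q - 1| * (r - s) ^ (q - 2)
        + 6 * ((r - s) ^ (q - α - 1) * (t - r - s) ^ (α - 1))) * s * s := by
  have hrs : 0 < r - s := by linarith
  have htrs : 0 < t - r - s := by linarith
  have hbound : ∀ u ∈ Icc (r - s) r, ∀ v ∈ Icc (t - s) t,
      C₀ * u ^ (q - α - 1) * (|q - 1| * v ^ (α - 1) + (v - u) ^ (α - 1))
        ≤ C₀ * (12 * |q - 1| * (r - s) ^ (q - 2)
          + 6 * ((r - s) ^ (q - α - 1) * (t - r - s) ^ (α - 1))) := by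
    rintro u ⟨hu₁, hu₂⟩ v ⟨hv₁, hv₂⟩
    have hu : u ^ (q - α - 1) ≤ 2 * (r - s) ^ (q - α - 1) :=
      rpow_le_mul_rpow_of_le_of_le_mul hrs hu₁ (by linarith) one_le_two hq
    have hv : v ^ (α - 1) ≤ 6 * (r - s) ^ (α - 1) :=
      rpow_le_mul_rpow_of_le_of_le_mul hrs (by linarith) (by linarith) (by norm_num) hα
    have hvu : (v - u) ^ (α - 1) ≤ 3 * (t - r - s) ^ (α - 1) :=
      rpow_le_mul_rpow_of_le_of_le_mul htrs (by linarith) (by linarith) (by norm_num) hα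
    have hsplit : (r - s) ^ (q - 2) = (r - s) ^ (q - α - 1) * (r - s) ^ (α - 1) := by
      rw [← Real.rpow_add hrs]; ring_nf
    calc C₀ * u ^ (q - α - 1) * (|q - 1| * v ^ (α - 1) + (v - u) ^ (α - 1))
        ≤ C₀ * (2 * (r - s) ^ (q - α - 1))
          * (|q - 1| * (6 * (r - s) ^ (α - 1)) + 3 * (t - r - s) ^ (α - 1)) := by
          have : 0 ≤ u ^ (q - α - 1) := Real.rpow_nonneg (hrs.le.trans hu₁) _
          have : 0 ≤ |q - 1| * v ^ (α - 1) + (v - u) ^ (α - 1) := by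
            have := Real.rpow_nonneg (by linarith : 0 ≤ v) (α - 1)
            have := Real.rpow_nonneg (by linarith : 0 ≤ v - u) (α - 1)
            positivity
          gcongr
      _ = _ := by rw [hsplit]; ring
  have h := abs_sub_sub_add_le_of_hasDerivWithinAt
    (f := fun u v => u ^ q * ψ (v / u)) (g := fun u v => u ^ (q - 1) * deriv ψ (v / u))
    (by linarith : r - s ≤ r) (by linarith : t - s ≤ t)
    (fun u hu v hv => (hasDerivAt_rpow_mul_comp_div (hrs.trans_le hu.1)
      (hdiff _ ((one_lt_div (hrs.trans_le hu.1)).2 (by linarith [hu.2, hv.1]))).1).hasDerivWithinAt)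
    (fun u hu v hv => (hasDerivAt_rpow_mul_deriv_comp_div (hrs.trans_le hu.1)
      (hdiff _ ((one_lt_div (hrs.trans_le hu.1)).2 (by linarith [hu.2, hv.1]))).2).hasDerivWithinAt)
    (fun u hu v hv => (abs_mixedDeriv_rpow_mul_comp_div_le hψ1 hψ2 (hrs.trans_le hu.1)
      (by linarith [hu.2, hv.1])).trans (hbound u hu v hv))
  simpa using h

end RescaledPsi

lemma abs_rpow_sub_mul_rpow_sub_le {p α r s t : ℝ} (hp : p ≤ 2) (hα : α ≤ 2)
    (hs : 0 < s) (h2s : 2 * s ≤ r) (hrt : r + 2 * s ≤ t) :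
    |(r ^ p - (r - s) ^ p) * ((t - r) ^ α - (t - r - s) ^ α)|
      ≤ 4 * |p| * |α| * (s ^ 2 * (r - s) ^ (p - 1) * (t - r - s) ^ (α - 1)) := by
  have h₁ := abs_rpow_sub_rpow_le (b := r) (by linarith : 0 < r - s) (by linarith)
    (by linarith : r ≤ 2 * (r - s)) one_le_two hp
  have h₂ := abs_rpow_sub_rpow_le (b := t - r) (by linarith : 0 < t - r - s) (by linarith)
    (by linarith : t - r ≤ 2 * (t - r - s)) one_le_two hα
  rw [abs_mul]
  calc |r ^ p - (r - s) ^ p| * |(t - r) ^ α - (t - r - s) ^ α|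
      ≤ (|p| * (2 * (r - s) ^ (p - 1)) * (r - (r - s)))
        * (|α| * (2 * (t - r - s) ^ (α - 1)) * (t - r - (t - r - s))) := by
        gcongr
        exact (abs_nonneg _).trans h₁
    _ = _ := by ring

section Covariance

variable {β α lam : ℝ} {φ ψ : ℝ → ℝ}

lemma Rcov_eq_of_le (hφψ : ∀ x : ℝ, 1 ≤ x → φ x = -lam * (x - 1) ^ α + ψ x)
    {a b : ℝ} (hb : 0 < b) (hba : b ≤ a) :
    Rcov β φ a b = -lam * (b ^ (2 * β - α) * (a - b) ^ α) + b ^ (2 * β) * ψ (a / b) := by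
  rw [Rcov, if_neg (by rintro (h | h) <;> linarith), min_eq_right hba, max_eq_left hba,
    hφψ _ ((one_le_div hb).2 hba), show a / b - 1 = (a - b) / b by field_simp,
    Real.div_rpow (by linarith) hb.le, Real.rpow_sub hb]
  field_simp

lemma Rcov_increment_sub_eq (hφψ : ∀ x : ℝ, 1 ≤ x → φ x = -lam * (x - 1) ^ α + ψ x)
    {r s t : ℝ} (hs : 0 ≤ s) (hsr : s < r) (hrt : r ≤ t - s) :
    (Rcov β φ t r - Rcov β φ (t - s) r - Rcov β φ t (r - s) + Rcov β φ (t - s) (r - s))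
        - lam * (r - s) ^ (2 * β - α) * ((t - r - s) ^ α + (t - r + s) ^ α - 2 * (t - r) ^ α)
      = -lam * ((r ^ (2 * β - α) - (r - s) ^ (2 * β - α)) * ((t - r) ^ α - (t - r - s) ^ α))
        + (r ^ (2 * β) * ψ (t / r) - r ^ (2 * β) * ψ ((t - s) / r)
          - (r - s) ^ (2 * β) * ψ (t / (r - s)) + (r - s) ^ (2 * β) * ψ ((t - s) / (r - s))) := by
  have hrs : 0 < r - s := by linarith
  rw [Rcov_eq_of_le hφψ (by linarith) (by linarith : r ≤ t),
    Rcov_eq_of_le hφψ (by linarith) hrt,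
    Rcov_eq_of_le hφψ hrs (by linarith : r - s ≤ t),
    Rcov_eq_of_le hφψ hrs (by linarith : r - s ≤ t - s),
    show t - s - r = t - r - s by ring, show t - (r - s) = t - r + s by ring,
    show t - s - (r - s) = t - r by ring]
  ring

end Covariance

theorem stmt_5_general (β α lam : ℝ) (φ ψ : ℝ → ℝ)
    (hβ1 : β < 1) (hα0 : 0 < α) (hα2β : α ≤ 2 * β)
    (h1 : CondH1 β α lam φ ψ) :
    ∃ C : ℝ, 0 < C ∧ ∀ r s t : ℝ, 0 < s → 2 * s ≤ t / 3 → t / 3 ≤ r → r ≤ t - 2 * s →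
      |(Rcov β φ t r - Rcov β φ (t - s) r - Rcov β φ t (r - s) + Rcov β φ (t - s) (r - s))
          - lam * (r - s) ^ (2 * β - α) *
            ((t - r - s) ^ α + (t - r + s) ^ α - 2 * (t - r) ^ α)|
        ≤ C * s ^ 2 * (r - s) ^ (2 * β - α - 1) * (t - r - s) ^ (α - 1)
          + C * s ^ 2 * (r - s) ^ (2 * β - 2) := by
  obtain ⟨hφψ, ⟨U, -, hU, hUdiff⟩, C₀, hC₀, hψ1, hψ2, -⟩ := h1
  have hdiff : ∀ x : ℝ, 1 < x → DifferentiableAt ℝ ψ x ∧ DifferentiableAt ℝ (deriv ψ) x :=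
    fun x hx => hUdiff x (hU hx.le)
  set c₁ := 4 * |lam| * |2 * β - α| * |α| + 6 * C₀
  set c₂ := 12 * C₀ * |2 * β - 1|
  refine ⟨c₁ + c₂ + 1, by positivity, fun r s t hs h2s htr hrt => ?_⟩
  have hrs : 0 < r - s := by linarith
  have hA : 0 ≤ s ^ 2 * (r - s) ^ (2 * β - α - 1) * (t - r - s) ^ (α - 1) :=
    mul_nonneg (mul_nonneg (sq_nonneg s) (Real.rpow_nonneg hrs.le _))
      (Real.rpow_nonneg (by linarith) _)
  have hB : 0 ≤ s ^ 2 * (r - s) ^ (2 * β - 2) :=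
    mul_nonneg (sq_nonneg s) (Real.rpow_nonneg hrs.le _)
  rw [Rcov_increment_sub_eq hφψ hs.le (by linarith) (by linarith)]
  refine (abs_add_le _ _).trans ?_
  rw [abs_mul, abs_neg]
  have hlamPart := abs_rpow_sub_mul_rpow_sub_le (p := 2 * β - α) (α := α) (by linarith)
    (by linarith) hs (by linarith) (by linarith : r + 2 * s ≤ t)
  have hψPart := abs_rpow_mul_comp_div_mixedDiff_le (q := 2 * β) (r := r) (s := s) (t := t)
    hdiff hψ1 hψ2 hC₀ (by linarith) (by linarith) hs (by linarith) (by linarith) (by linarith)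
  have hc₁ : 0 ≤ c₁ := by positivity
  have hc₂ : 0 ≤ c₂ := by positivity
  calc _ ≤ |lam| * (4 * |2 * β - α| * |α|
            * (s ^ 2 * (r - s) ^ (2 * β - α - 1) * (t - r - s) ^ (α - 1)))
        + C₀ * (12 * |2 * β - 1| * (r - s) ^ (2 * β - 2)
          + 6 * ((r - s) ^ (2 * β - α - 1) * (t - r - s) ^ (α - 1))) * s * s := by gcongr
    _ = c₁ * (s ^ 2 * (r - s) ^ (2 * β - α - 1) * (t - r - s) ^ (α - 1))
        + c₂ * (s ^ 2 * (r - s) ^ (2 * β - 2)) := by ring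
    _ ≤ (c₁ + c₂ + 1) * (s ^ 2 * (r - s) ^ (2 * β - α - 1) * (t - r - s) ^ (α - 1))
        + (c₁ + c₂ + 1) * (s ^ 2 * (r - s) ^ (2 * β - 2)) := by gcongr <;> linarith
    _ = _ := by ring

/-- Lemma 3.2(b) of the paper: under (H.1), for `0 < 2s ≤ t/3 ≤ r ≤ t - 2s`, the remainder
`g₃(r,t,s) = E[(X_t-X_{t-s})(X_r-X_{r-s})] - λ(r-s)^{2β-α}[(t-r-s)^α+(t-r+s)^α-2(t-r)^α]`
satisfies `|g₃(r,t,s)| ≤ C s² (r-s)^{2β-α-1}(t-r-s)^{α-1} + C s² (r-s)^{2β-2}`. -/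
theorem stmt_5 (β α lam : ℝ) (φ ψ : ℝ → ℝ)
    (hβ0 : 0 < β) (hβ1 : β < 1) (hα0 : 0 < α) (hα2β : α ≤ 2 * β) (hlam : 0 < lam)
    (h1 : CondH1 β α lam φ ψ) :
    ∃ C : ℝ, 0 < C ∧ ∀ r s t : ℝ, 0 < s → 2 * s ≤ t / 3 → t / 3 ≤ r → r ≤ t - 2 * s →
      |(Rcov β φ t r - Rcov β φ (t - s) r - Rcov β φ t (r - s) + Rcov β φ (t - s) (r - s))
          - lam * (r - s) ^ (2 * β - α) *
            ((t - r - s) ^ α + (t - r + s) ^ α - 2 * (t - r) ^ α)|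
        ≤ C * s ^ 2 * (r - s) ^ (2 * β - α - 1) * (t - r - s) ^ (α - 1)
          + C * s ^ 2 * (r - s) ^ (2 * β - 2) :=
  stmt_5_general β α lam φ ψ hβ1 hα0 hα2β h1
end
end

section
/- Assume conditions (H.1) and (H.2) hold for (β, α, λ, φ). Then there exists a constant C > 0 such that for all integers j, k ≥ 1 with 3k ≤ j: |r(j,k)| ≤ C k^{2β+ν-2} (j-k)^{-ν} if α < 1, and |r(j,k)| ≤ C k^{2β-α} (j-k)^{α-2} if α ≥ 1. (Equivalently, by the homogeneity R(as,at) = a^{2β} R(s,t), for every n the increment covariance R((j+1)/n,(k+1)/n) - R(j/n,(k+1)/n) - R((j+1)/n,k/n) + R(j/n,k/n) is bounded by C n^{-2β} k^{2β+ν-2}(j-k)^{-ν} when α < 1 and by C n^{-2β} k^{2β-α}(j-k)^{α-2} when α ≥ 1.) -/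
noncomputable section

open Filter MeasureTheory

/-!
For `j ≥ 2k + 2` all four points of the rectangle lie above the diagonal, where
`R(s,t) = t^{2β} φ(s/t)`. The mean value theorem in `s` and then in `t` writes `r(j,k)` as
`η^{2β-2} ((2β-1) φ'(x) - x φ''(x))` with `x = ξ/η ≥ 2`, `ξ ∈ (j, j+1)`, `η ∈ (k, k+1)`.
By (H.2) and `x ≤ 2(x-1)` this is `O(η^{2β-2} (x-1)^p) = O(η^{2β-2-p} (ξ-η)^p)`, where
`p = -ν` or `p = α - 2`, and `η ≍ k`, `ξ - η ≍ j - k`. The only pair with `3k ≤ j < 2k + 2`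
is `(j,k) = (3,1)`, which is absorbed into the constant.
-/

open Set Topology

lemma rpow_le_four_mul_rpow {x y e : ℝ} (hx : 0 < x) (hy : 0 < y) (hxy : x ≤ 2 * y)
    (hyx : y ≤ 2 * x) (he : |e| ≤ 2) : x ^ e ≤ 4 * y ^ e := by
  have hlog : |Real.log x - Real.log y| ≤ Real.log 2 := by
    have h₁ := Real.log_le_log hx hxy
    have h₂ := Real.log_le_log hy hyx
    rw [Real.log_mul two_ne_zero hy.ne'] at h₁
    rw [Real.log_mul two_ne_zero hx.ne'] at h₂
    exact abs_sub_le_iff.2 ⟨by linarith, by linarith⟩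
  have hexp : (Real.log x - Real.log y) * e ≤ Real.log 2 * 2 :=
    (le_abs_self _).trans <| (abs_mul _ _).trans_le <|
      mul_le_mul hlog he (abs_nonneg _) (Real.log_nonneg one_le_two)
  calc x ^ e = Real.exp ((Real.log x - Real.log y) * e) * y ^ e := by
        rw [Real.rpow_def_of_pos hx, Real.rpow_def_of_pos hy, ← Real.exp_add]; ring_nf
    _ ≤ Real.exp (Real.log 2 * 2) * y ^ e := by gcongr
    _ = 4 * y ^ e := by rw [← Real.rpow_def_of_pos two_pos]; norm_num

lemma abs_mul_sub_mul_le {b x u v C p : ℝ} (hb : |b| ≤ 1) (hx : 2 ≤ x)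
    (hu : |u| ≤ C * (x - 1) ^ p) (hv : |v| ≤ C * (x - 1) ^ (p - 1)) :
    |b * u - x * v| ≤ 3 * C * (x - 1) ^ p := by
  have hx1 : 0 < x - 1 := by linarith
  have hpow : (x - 1) ^ p = (x - 1) ^ (p - 1) * (x - 1) := by
    rw [← Real.rpow_add_one hx1.ne', sub_add_cancel]
  have hC : 0 ≤ C * (x - 1) ^ (p - 1) := (abs_nonneg v).trans hv
  calc |b * u - x * v| ≤ |b * u| + |x * v| := abs_sub _ _
    _ = |b| * |u| + x * |v| := by rw [abs_mul, abs_mul, abs_of_pos (by linarith : 0 < x)]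
    _ ≤ 1 * (C * (x - 1) ^ p) + (2 * (x - 1)) * (C * (x - 1) ^ (p - 1)) :=
        add_le_add (mul_le_mul hb hu (abs_nonneg u) zero_le_one)
          (mul_le_mul (by linarith) hv (abs_nonneg v) (by linarith))
    _ = 3 * C * (x - 1) ^ p := by rw [hpow]; ring

lemma Rcov_of_le {β : ℝ} {φ : ℝ → ℝ} {s t : ℝ} (ht : 0 < t) (hts : t ≤ s) :
    Rcov β φ s t = t ^ (2 * β) * φ (s / t) := by
  rw [Rcov, if_neg (by push Not; exact ⟨(ht.trans_le hts).ne', ht.ne'⟩), min_eq_right hts,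
    max_eq_left hts]

lemma hasDerivAt_rpow_mul_comp_div_const {f : ℝ → ℝ} {a c s : ℝ} (hc : 0 < c)
    (hf : DifferentiableAt ℝ f (s / c)) :
    HasDerivAt (fun s => c ^ a * f (s / c)) (c ^ (a - 1) * deriv f (s / c)) s := by
  refine ((hf.hasDerivAt.comp s ((hasDerivAt_id s).div_const c)).const_mul (c ^ a)).congr_deriv ?_
  rw [Real.rpow_sub_one hc.ne']; ring

lemma hasDerivAt_rpow_mul_comp_const_div {f : ℝ → ℝ} {a ξ t : ℝ} (ht : 0 < t)
    (hf : DifferentiableAt ℝ f (ξ / t)) :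
    HasDerivAt (fun t => t ^ a * f (ξ / t))
      (t ^ (a - 1) * (a * f (ξ / t) - ξ / t * deriv f (ξ / t))) t := by
  have hdiv : HasDerivAt (fun t => ξ / t) (-(ξ / t) / t) t := by
    refine ((hasDerivAt_inv ht.ne').const_mul ξ).congr_deriv ?_; ring
  refine ((Real.hasDerivAt_rpow_const (p := a) (Or.inl ht.ne')).mul
    (hf.hasDerivAt.comp t hdiv)).congr_deriv ?_
  rw [Real.rpow_sub_one ht.ne']; simp only [Function.comp]; field_simp; ring

section Increment

variable {β : ℝ} {φ : ℝ → ℝ}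

lemma exists_Rcov_increment_eq (hφ : ∀ x, 1 < x → DifferentiableAt ℝ φ x)
    (hφ' : ∀ x, 1 < x → DifferentiableAt ℝ (deriv φ) x) {J K : ℝ} (hK : 0 < K)
    (hKJ : K + 1 < J) :
    ∃ ξ ∈ Ioo J (J + 1), ∃ η ∈ Ioo K (K + 1),
      Rcov β φ (J + 1) (K + 1) - Rcov β φ J (K + 1) - Rcov β φ (J + 1) K + Rcov β φ J K =
        η ^ (2 * β - 2) * ((2 * β - 1) * deriv φ (ξ / η) - ξ / η * deriv (deriv φ) (ξ / η)) := by
  have one_lt_div_of_lt {s c : ℝ} (hc : 0 < c) (hcs : c < s) : 1 < s / c := (one_lt_div hc).2 hcs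
  have hF : ∀ s ∈ Icc J (J + 1), HasDerivAt
      (fun s => (K + 1) ^ (2 * β) * φ (s / (K + 1)) - K ^ (2 * β) * φ (s / K))
      ((K + 1) ^ (2 * β - 1) * deriv φ (s / (K + 1)) - K ^ (2 * β - 1) * deriv φ (s / K)) s :=
    fun s hs => (hasDerivAt_rpow_mul_comp_div_const (by linarith)
        (hφ _ (one_lt_div_of_lt (by linarith) (by linarith [hs.1])))).sub
      (hasDerivAt_rpow_mul_comp_div_const hK (hφ _ (one_lt_div_of_lt hK (by linarith [hs.1]))))
  obtain ⟨ξ, hξ, hξeq⟩ := exists_hasDerivAt_eq_slope _ _ (lt_add_one J)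
    (HasDerivAt.continuousOn hF) fun s hs => hF s (Ioo_subset_Icc_self hs)
  have hG : ∀ t ∈ Icc K (K + 1), HasDerivAt (fun t => t ^ (2 * β - 1) * deriv φ (ξ / t))
      (t ^ (2 * β - 1 - 1) *
        ((2 * β - 1) * deriv φ (ξ / t) - ξ / t * deriv (deriv φ) (ξ / t))) t :=
    fun t ht => hasDerivAt_rpow_mul_comp_const_div (by linarith [ht.1])
      (hφ' _ (one_lt_div_of_lt (by linarith [ht.1]) (by linarith [ht.2, hξ.1])))
  obtain ⟨η, hη, hηeq⟩ := exists_hasDerivAt_eq_slope _ _ (lt_add_one K)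
    (HasDerivAt.continuousOn hG) fun t ht => hG t (Ioo_subset_Icc_self ht)
  refine ⟨ξ, hξ, η, hη, ?_⟩
  rw [Rcov_of_le (by linarith) (by linarith), Rcov_of_le (by linarith) (by linarith),
    Rcov_of_le hK (by linarith), Rcov_of_le hK (by linarith),
    show 2 * β - 2 = 2 * β - 1 - 1 by ring, hηeq]
  simp only [add_sub_cancel_left, div_one] at hξeq ⊢
  linear_combination -hξeq

lemma abs_rincr_le (hβ0 : 0 < β) (hβ1 : β < 1) {C₁ p : ℝ} (hC₁ : 0 ≤ C₁) (hp : -2 ≤ p)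
    (hp0 : p ≤ 0) (hφ : ∀ x, 1 < x → DifferentiableAt ℝ φ x)
    (hφ' : ∀ x, 1 < x → DifferentiableAt ℝ (deriv φ) x)
    (hb : ∀ x, 2 ≤ x →
      |deriv φ x| ≤ C₁ * (x - 1) ^ p ∧ |deriv (deriv φ) x| ≤ C₁ * (x - 1) ^ (p - 1))
    {j k : ℕ} (hk : 1 ≤ k) (hj : 2 * k + 2 ≤ j) :
    |rincr β φ j k| ≤ 48 * C₁ * (k : ℝ) ^ (2 * β - 2 - p) * ((j : ℝ) - k) ^ p := by
  have hK : (1 : ℝ) ≤ k := by exact_mod_cast hk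
  have hJ : 2 * (k : ℝ) + 2 ≤ j := by exact_mod_cast hj
  obtain ⟨ξ, ⟨hξJ, hξJ'⟩, η, ⟨hηK, hηK'⟩, hr⟩ :=
    exists_Rcov_increment_eq (β := β) (J := j) hφ hφ' (by linarith : (0 : ℝ) < k) (by linarith)
  have hη : 0 < η := by linarith
  have hx : 2 ≤ ξ / η := (le_div_iff₀ hη).2 (by linarith)
  have hsplit : η ^ (2 * β - 2) * (ξ / η - 1) ^ p = η ^ (2 * β - 2 - p) * (ξ - η) ^ p := by
    rw [div_sub_one hη.ne', Real.div_rpow (by linarith) hη.le, Real.rpow_sub hη (2 * β - 2) p]; ring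
  have hηk : η ^ (2 * β - 2 - p) ≤ 4 * (k : ℝ) ^ (2 * β - 2 - p) :=
    rpow_le_four_mul_rpow hη (by linarith) (by linarith) (by linarith)
      (abs_le.2 ⟨by linarith, by linarith⟩)
  have hξηjk : (ξ - η) ^ p ≤ 4 * ((j : ℝ) - k) ^ p :=
    rpow_le_four_mul_rpow (by linarith) (by linarith) (by linarith) (by linarith)
      (abs_le.2 ⟨by linarith, by linarith⟩)
  calc |rincr β φ j k|
      = η ^ (2 * β - 2) * |(2 * β - 1) * deriv φ (ξ / η) - ξ / η * deriv (deriv φ) (ξ / η)| := by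
        rw [rincr, hr, abs_mul, abs_of_pos (Real.rpow_pos_of_pos hη _)]
    _ ≤ η ^ (2 * β - 2) * (3 * C₁ * (ξ / η - 1) ^ p) := by
        gcongr
        exact abs_mul_sub_mul_le (abs_le.2 ⟨by linarith, by linarith⟩) hx (hb _ hx).1 (hb _ hx).2
    _ = 3 * C₁ * (η ^ (2 * β - 2 - p) * (ξ - η) ^ p) := by rw [← hsplit]; ring
    _ ≤ 3 * C₁ * (4 * (k : ℝ) ^ (2 * β - 2 - p) * (4 * ((j : ℝ) - k) ^ p)) := by
        gcongr; exact Real.rpow_nonneg (by linarith) p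
    _ = 48 * C₁ * (k : ℝ) ^ (2 * β - 2 - p) * ((j : ℝ) - k) ^ p := by ring

lemma exists_abs_rincr_le (hβ0 : 0 < β) (hβ1 : β < 1) {C₁ p : ℝ} (hC₁ : 0 ≤ C₁) (hp : -2 ≤ p)
    (hp0 : p ≤ 0) (hφ : ∀ x, 1 < x → DifferentiableAt ℝ φ x)
    (hφ' : ∀ x, 1 < x → DifferentiableAt ℝ (deriv φ) x)
    (hb : ∀ x, 2 ≤ x →
      |deriv φ x| ≤ C₁ * (x - 1) ^ p ∧ |deriv (deriv φ) x| ≤ C₁ * (x - 1) ^ (p - 1)) :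
    ∃ C, 0 < C ∧ ∀ j k : ℕ, 1 ≤ k → 3 * k ≤ j →
      |rincr β φ j k| ≤ C * (k : ℝ) ^ (2 * β - 2 - p) * ((j : ℝ) - k) ^ p := by
  set C := 48 * C₁ + 4 * |rincr β φ 3 1| + 1
  have hr31 := abs_nonneg (rincr β φ 3 1)
  refine ⟨C, by positivity, fun j k hk hj => ?_⟩
  rcases le_or_gt (2 * k + 2) j with hj' | hj'
  · have hkj : (k : ℝ) ≤ j := by exact_mod_cast (by omega : k ≤ j)
    calc |rincr β φ j k| ≤ 48 * C₁ * (k : ℝ) ^ (2 * β - 2 - p) * ((j : ℝ) - k) ^ p :=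
          abs_rincr_le hβ0 hβ1 hC₁ hp hp0 hφ hφ' hb hk hj'
      _ ≤ C * (k : ℝ) ^ (2 * β - 2 - p) * ((j : ℝ) - k) ^ p := by
          gcongr
          linarith
  · obtain ⟨rfl, rfl⟩ : j = 3 ∧ k = 1 := by omega
    have h2p : (1 / 4 : ℝ) ≤ 2 ^ p :=
      calc (1 / 4 : ℝ) = 2 ^ (-2 : ℝ) := by norm_num
        _ ≤ 2 ^ p := Real.rpow_le_rpow_of_exponent_le one_le_two hp
    rw [show ((3 : ℕ) : ℝ) - (1 : ℕ) = 2 by norm_num, Nat.cast_one, Real.one_rpow, mul_one]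
    nlinarith

end Increment

lemma CondH1.differentiableAt {β α lam : ℝ} {φ ψ : ℝ → ℝ} (h : CondH1 β α lam φ ψ) {x : ℝ}
    (hx : 1 < x) : DifferentiableAt ℝ φ x ∧ DifferentiableAt ℝ (deriv φ) x := by
  obtain ⟨hφψ, ⟨U, -, hU, hψ⟩, -⟩ := h
  have hpow : ∀ y, 1 < y → HasDerivAt (fun z => (z - 1) ^ α) (α * (y - 1) ^ (α - 1)) y :=
    fun y hy => by
      have := (Real.hasDerivAt_rpow_const (p := α) (Or.inl (sub_ne_zero.2 hy.ne'))).comp y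
        ((hasDerivAt_id y).sub_const 1)
      rwa [mul_one] at this
  have hφ_deriv : ∀ y, 1 < y →
      HasDerivAt φ (-lam * (α * (y - 1) ^ (α - 1)) + deriv ψ y) y := fun y hy =>
    ((hpow y hy).const_mul (-lam)).add (hψ y (hU hy.le)).1.hasDerivAt |>.congr_of_eventuallyEq
      ((eventually_gt_nhds hy).mono fun z hz => hφψ z hz.le)
  have hφ'_eq : deriv φ =ᶠ[𝓝 x] fun y => -lam * (α * (y - 1) ^ (α - 1)) + deriv ψ y :=
    (eventually_gt_nhds hx).mono fun y hy => (hφ_deriv y hy).deriv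
  refine ⟨(hφ_deriv x hx).differentiableAt, DifferentiableAt.congr_of_eventuallyEq ?_ hφ'_eq⟩
  exact ((((differentiableAt_id.sub_const 1).rpow_const
    (Or.inl (sub_ne_zero.2 hx.ne'))).const_mul α).const_mul (-lam)).add (hψ x (hU hx.le)).2

theorem stmt_6_general (β α lam ν C₁ : ℝ) (φ ψ : ℝ → ℝ)
    (hβ0 : 0 < β) (hβ1 : β < 1) (hα2β : α ≤ 2 * β)
    (h1 : CondH1 β α lam φ ψ) (h2 : CondH2 α ν C₁ φ) :
    ∃ C : ℝ, 0 < C ∧ ∀ j k : ℕ, 1 ≤ k → 3 * k ≤ j →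
      (α < 1 →
        |rincr β φ j k| ≤ C * (k : ℝ) ^ (2 * β + ν - 2) * ((j : ℝ) - (k : ℝ)) ^ (-ν)) ∧
      (1 ≤ α →
        |rincr β φ j k| ≤ C * (k : ℝ) ^ (2 * β - α) * ((j : ℝ) - (k : ℝ)) ^ (α - 2)) := by
  obtain ⟨hC₁, hν1, hν2, hφ_bound⟩ := h2
  have hφ : ∀ x, 1 < x → DifferentiableAt ℝ φ x := fun x hx => (h1.differentiableAt hx).1
  have hφ' : ∀ x, 1 < x → DifferentiableAt ℝ (deriv φ) x := fun x hx =>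
    (h1.differentiableAt hx).2
  rcases lt_or_ge α 1 with hα | hα
  · obtain ⟨C, hC, hr⟩ := exists_abs_rincr_le (p := -ν) hβ0 hβ1 hC₁.le (by linarith)
      (by linarith) hφ hφ' fun x hx => (hφ_bound x hx).1 hα
    refine ⟨C, hC, fun j k hk hj => ⟨fun _ => ?_, fun h => absurd hα h.not_gt⟩⟩
    simpa only [show 2 * β - 2 - -ν = 2 * β + ν - 2 by ring] using hr j k hk hj
  · obtain ⟨C, hC, hr⟩ := exists_abs_rincr_le (p := α - 2) hβ0 hβ1 hC₁.le (by linarith)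
      (by linarith) hφ hφ' fun x hx => by
        simpa only [show α - 3 = α - 2 - 1 by ring] using (hφ_bound x hx).2 hα
    refine ⟨C, hC, fun j k hk hj => ⟨fun h => absurd hα h.not_ge, fun _ => ?_⟩⟩
    simpa only [show 2 * β - 2 - (α - 2) = 2 * β - α by ring] using hr j k hk hj

/-- Lemma 5.1 of the paper: under (H.1) and (H.2), for integers `j, k ≥ 1` with `3k ≤ j`,
the increment covariance satisfies `|r(j,k)| ≤ C k^{2β+ν-2}(j-k)^{-ν}` if `α < 1`, and
`|r(j,k)| ≤ C k^{2β-α}(j-k)^{α-2}` if `α ≥ 1`. -/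
theorem stmt_6 (β α lam ν C₁ : ℝ) (φ ψ : ℝ → ℝ)
    (hβ0 : 0 < β) (hβ1 : β < 1) (hα0 : 0 < α) (hα2β : α ≤ 2 * β) (hlam : 0 < lam)
    (h1 : CondH1 β α lam φ ψ) (h2 : CondH2 α ν C₁ φ) :
    ∃ C : ℝ, 0 < C ∧ ∀ j k : ℕ, 1 ≤ k → 3 * k ≤ j →
      (α < 1 →
        |rincr β φ j k| ≤ C * (k : ℝ) ^ (2 * β + ν - 2) * ((j : ℝ) - (k : ℝ)) ^ (-ν)) ∧
      (1 ≤ α →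
        |rincr β φ j k| ≤ C * (k : ℝ) ^ (2 * β - α) * ((j : ℝ) - (k : ℝ)) ^ (α - 2)) :=
  stmt_6_general β α lam ν C₁ φ ψ hβ0 hβ1 hα2β h1 h2
end
end
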